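/- Let y : ℝ³ × ℝ → ℝ³ be a C² map, write v_i = ∂y_i/∂t and F_{iα}(x,t) = ∂y_i/∂x_α. Then for all (x,t) and all i, α ∈ {1,2,3}: ∂/∂t [ (cof F(x,t))_{iα} ] = Σ_{β} ∂/∂x_β [ ε_{ijk} ε_{αβγ} v_j(x,t) F_{kγ}(x,t) ] (sum over j, k, γ as well). -/

import Mathlib

/-!
Differentiating the quadratic `cof F` in time gives
`∂ₜ(cof F)_{iα} = ε_{ijk} ε_{αβγ} ∂ₜF_{jβ} F_{kγ}`, because `ε_{ijk} ε_{αβγ}` is invariant under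
the simultaneous swap `(j, β) ↔ (k, γ)`. The Leibniz rule splits the flux divergence into
`ε_{ijk} ε_{αβγ} ∂_β v_j F_{kγ}`, which matches since `∂_β v_j = ∂_β ∂_t y_j = ∂_t F_{jβ}`, and
`ε_{ijk} ε_{αβγ} v_j ∂_β F_{kγ}`, which vanishes since the Hessian `∂_β ∂_γ y_k` is symmetric
while `ε_{αβγ}` is antisymmetric in `β, γ`. Both facts about mixed partials are the symmetry of
the second derivative of a `C²` map.
-/

noncomputable section

/-- Matrices as `Fin 3 → Fin 3 → ℝ`. -/
abbrev Mat3 : Type := Fin 3 → Fin 3 → ℝ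

/-- The Levi-Civita symbol on `Fin 3`. -/
def lev (i j k : Fin 3) : ℝ :=
  (((j : ℕ) : ℝ) - ((i : ℕ) : ℝ)) * (((k : ℕ) : ℝ) - ((i : ℕ) : ℝ)) *
    (((k : ℕ) : ℝ) - ((j : ℕ) : ℝ)) / 2

/-- The cofactor matrix `(cof M)_{iα} = ½ ε_{ijk} ε_{αβγ} M_{jβ} M_{kγ}`. -/
def cof3 (M : Mat3) : Mat3 := fun i α =>
  (1 / 2) * ∑ j, ∑ k, ∑ β, ∑ γ, lev i j k * lev α β γ * M j β * M k γ

open Finset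

theorem lev_swap_right (a b c : Fin 3) : lev a c b = -lev a b c := by
  unfold lev; ring

theorem lev_mul_lev_swap_right (i j k α β γ : Fin 3) :
    lev i k j * lev α γ β = lev i j k * lev α β γ := by
  rw [lev_swap_right, lev_swap_right α]; ring

theorem sum_lev_mul_eq_zero_of_symm (α : Fin 3) (Q : Fin 3 → Fin 3 → ℝ)
    (hQ : ∀ β γ, Q β γ = Q γ β) : ∑ β, ∑ γ, lev α β γ * Q β γ = 0 := by
  have h : ∑ β, ∑ γ, lev α β γ * Q β γ = ∑ β, ∑ γ, -(lev α β γ * Q β γ) := by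
    rw [sum_comm]
    exact sum_congr rfl fun β _ => sum_congr rfl fun γ _ => by
      rw [lev_swap_right, hQ]; ring
  simp only [sum_neg_distrib] at h
  linarith

theorem sum_lev_mul_lev_mul_comm (i α : Fin 3) (A B : Mat3) :
    ∑ j, ∑ k, ∑ β, ∑ γ, lev i j k * lev α β γ * A j β * B k γ =
      ∑ j, ∑ k, ∑ β, ∑ γ, lev i j k * lev α β γ * B j β * A k γ := by
  rw [sum_comm]
  refine sum_congr rfl fun k _ => sum_congr rfl fun j _ => ?_
  rw [sum_comm]
  refine sum_congr rfl fun γ _ => sum_congr rfl fun β _ => ?_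
  rw [← lev_mul_lev_swap_right]; ring

theorem sum_lev_mul_lev_mul_eq_sum_flux (i α : Fin 3) (G F : Mat3) (v : Fin 3 → ℝ)
    (H : Fin 3 → Fin 3 → Fin 3 → ℝ) (hH : ∀ k β γ, H k β γ = H k γ β) :
    ∑ j, ∑ k, ∑ β, ∑ γ, lev i j k * lev α β γ * G j β * F k γ =
      ∑ β, ∑ j, ∑ k, ∑ γ, lev i j k * lev α β γ * (G j β * F k γ + v j * H k β γ) := by
  have hvanish : ∀ j k, ∑ β, ∑ γ, lev i j k * lev α β γ * (v j * H k β γ) = 0 := by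
    intro j k
    calc _ = lev i j k * v j * ∑ β, ∑ γ, lev α β γ * H k β γ := by
          simp only [mul_sum]
          exact sum_congr rfl fun _ _ => sum_congr rfl fun _ _ => by ring
      _ = 0 := by rw [sum_lev_mul_eq_zero_of_symm α _ (hH k), mul_zero]
  have hreorder : ∀ f : Fin 3 → Fin 3 → Fin 3 → Fin 3 → ℝ,
      ∑ β, ∑ j, ∑ k, ∑ γ, f j k β γ = ∑ j, ∑ k, ∑ β, ∑ γ, f j k β γ := fun f => by
    rw [sum_comm]
    exact sum_congr rfl fun j _ => sum_comm
  symm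
  rw [hreorder]
  simp only [mul_add, sum_add_distrib, hvanish, add_zero]
  simp only [mul_assoc]

theorem hasDerivAt_cof3 {M : ℝ → Mat3} {M' : Mat3} {t : ℝ}
    (hM : ∀ j β, HasDerivAt (fun s => M s j β) (M' j β) t) (i α : Fin 3) :
    HasDerivAt (fun s => cof3 (M s) i α)
      (∑ j, ∑ k, ∑ β, ∑ γ, lev i j k * lev α β γ * M' j β * M t k γ) t := by
  have h := HasDerivAt.const_mul (1 / 2 : ℝ) <|
    HasDerivAt.fun_sum (u := univ) fun j _ => HasDerivAt.fun_sum (u := univ) fun k _ =>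
      HasDerivAt.fun_sum (u := univ) fun β _ => HasDerivAt.fun_sum (u := univ) fun γ _ =>
        ((hM j β).const_mul (lev i j k * lev α β γ)).fun_mul (hM k γ)
  refine h.congr_deriv ?_
  simp only [sum_add_distrib]
  rw [sum_lev_mul_lev_mul_comm i α (M t) M']
  ring

section ProductSlices

variable {E G : Type*} [NormedAddCommGroup E] [NormedSpace ℝ E]
  [NormedAddCommGroup G] [NormedSpace ℝ G] {x : E} {t : ℝ}

theorem hasFDerivAt_fderiv_apply {f : E → G} {p : E} (hf : DifferentiableAt ℝ (fderiv ℝ f) p)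
    (u : E) : HasFDerivAt (fun q => fderiv ℝ f q u) ((fderiv ℝ (fderiv ℝ f) p).flip u) p := by
  simpa using hf.hasFDerivAt.clm_apply (hasFDerivAt_const u p)

theorem HasFDerivAt.hasDerivAt_slice_right {g : E × ℝ → G} {g' : E × ℝ →L[ℝ] G}
    (hg : HasFDerivAt g g' (x, t)) : HasDerivAt (fun s => g (x, s)) (g' (0, 1)) t := by
  simpa [Function.comp_def] using (hg.comp t (hasFDerivAt_prodMk_right x t)).hasDerivAt

theorem HasFDerivAt.hasFDerivAt_slice_left {g : E × ℝ → G} {g' : E × ℝ →L[ℝ] G}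
    (hg : HasFDerivAt g g' (x, t)) :
    HasFDerivAt (fun z => g (z, t)) (g'.comp (.inl ℝ E ℝ)) x :=
  hg.comp x (hasFDerivAt_prodMk_left x t)

theorem DifferentiableAt.deriv_slice_right {g : E × ℝ → G} (hg : DifferentiableAt ℝ g (x, t)) :
    deriv (fun s => g (x, s)) t = fderiv ℝ g (x, t) (0, 1) :=
  hg.hasFDerivAt.hasDerivAt_slice_right.deriv

theorem DifferentiableAt.fderiv_slice_left_apply {g : E × ℝ → G}
    (hg : DifferentiableAt ℝ g (x, t)) (u : E) :
    fderiv ℝ (fun z => g (z, t)) x u = fderiv ℝ g (x, t) (u, 0) := by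
  rw [hg.hasFDerivAt.hasFDerivAt_slice_left.fderiv]
  rfl

variable {f : E × ℝ → G}

theorem ContDiff.differentiable_fderiv_of_two (hf : ContDiff ℝ 2 f) :
    Differentiable ℝ (fderiv ℝ f) :=
  (hf.fderiv_right (m := 1) (by norm_num)).differentiable (by norm_num)

theorem ContDiff.hasDerivAt_fderiv_slice_left_apply (hf : ContDiff ℝ 2 f) (u : E) :
    HasDerivAt (fun s => fderiv ℝ (fun z => f (z, s)) x u)
      (fderiv ℝ (fderiv ℝ f) (x, t) (0, 1) (u, 0)) t := by
  have hslice : (fun s => fderiv ℝ (fun z => f (z, s)) x u) = fun s => fderiv ℝ f (x, s) (u, 0) :=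
    funext fun s => (hf.differentiable (by norm_num) (x, s)).fderiv_slice_left_apply u
  rw [hslice]
  exact (hasFDerivAt_fderiv_apply (hf.differentiable_fderiv_of_two (x, t)) _).hasDerivAt_slice_right

theorem ContDiff.hasFDerivAt_deriv_slice_right (hf : ContDiff ℝ 2 f) :
    HasFDerivAt (fun z => deriv (fun s => f (z, s)) t)
      (((fderiv ℝ (fderiv ℝ f) (x, t)).flip (0, 1)).comp (.inl ℝ E ℝ)) x := by
  have hslice : (fun z => deriv (fun s => f (z, s)) t) = fun z => fderiv ℝ f (z, t) (0, 1) :=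
    funext fun z => (hf.differentiable (by norm_num) (z, t)).deriv_slice_right
  rw [hslice]
  exact (hasFDerivAt_fderiv_apply (hf.differentiable_fderiv_of_two (x, t)) _).hasFDerivAt_slice_left

theorem ContDiff.hasFDerivAt_fderiv_slice_left_apply (hf : ContDiff ℝ 2 f) (u : E) :
    HasFDerivAt (fun z => fderiv ℝ (fun w => f (w, t)) z u)
      (((fderiv ℝ (fderiv ℝ f) (x, t)).flip (u, 0)).comp (.inl ℝ E ℝ)) x := by
  have hslice : (fun z => fderiv ℝ (fun w => f (w, t)) z u) = fun z => fderiv ℝ f (z, t) (u, 0) :=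
    funext fun z => (hf.differentiable (by norm_num) (z, t)).fderiv_slice_left_apply u
  rw [hslice]
  exact (hasFDerivAt_fderiv_apply (hf.differentiable_fderiv_of_two (x, t)) _).hasFDerivAt_slice_left

end ProductSlices

theorem fderiv_sum_sum_sum_mul_apply {ι κ μ E : Type*} [Fintype ι] [Fintype κ] [Fintype μ]
    [NormedAddCommGroup E] [NormedSpace ℝ E] {a : ι → E → ℝ} {a' : ι → E →L[ℝ] ℝ}
    {b : κ → μ → E → ℝ} {b' : κ → μ → E →L[ℝ] ℝ} {x : E}
    (ha : ∀ j, HasFDerivAt (a j) (a' j) x) (hb : ∀ k γ, HasFDerivAt (b k γ) (b' k γ) x)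
    (c : ι → κ → μ → ℝ) (w : E) :
    fderiv ℝ (fun z => ∑ j, ∑ k, ∑ γ, c j k γ * a j z * b k γ z) x w =
      ∑ j, ∑ k, ∑ γ, c j k γ * (a' j w * b k γ x + a j x * b' k γ w) := by
  have h := HasFDerivAt.fun_sum (u := univ) fun j _ => HasFDerivAt.fun_sum (u := univ) fun k _ =>
    HasFDerivAt.fun_sum (u := univ) fun γ _ => ((ha j).const_mul (c j k γ)).fun_mul (hb k γ)
  rw [h.fderiv]
  simp only [FunLike.coe_sum, Finset.sum_apply, add_apply, smul_apply, smul_eq_mul]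
  exact sum_congr rfl fun j _ => sum_congr rfl fun k _ => sum_congr rfl fun γ _ => by ring

/-- Kinematic transport identity for the cofactor (kinnl): for a `C²` motion
`y(x,t)` with velocity `v = ∂_t y` and deformation gradient `F = ∇_x y`,
`∂_t (cof F)_{iα} = Σ_β ∂_β ( ε_{ijk} ε_{αβγ} v_j F_{kγ} )`. -/
theorem statement_7 (y : (Fin 3 → ℝ) → ℝ → (Fin 3 → ℝ))
    (hy : ContDiff ℝ 2 (fun q : (Fin 3 → ℝ) × ℝ => y q.1 q.2))
    (v : (Fin 3 → ℝ) → ℝ → (Fin 3 → ℝ))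
    (hv : ∀ x t i, v x t i = deriv (fun s => y x s i) t)
    (F : (Fin 3 → ℝ) → ℝ → Mat3)
    (hF : ∀ x t i α, F x t i α = fderiv ℝ (fun z => y z t i) x (Pi.single α 1)) :
    ∀ (x : Fin 3 → ℝ) (t : ℝ) (i α : Fin 3),
      deriv (fun s => cof3 (F x s) i α) t =
        ∑ β, fderiv ℝ
          (fun z => ∑ j, ∑ k, ∑ γ, lev i j k * lev α β γ * v z t j * F z t k γ)
          x (Pi.single β 1) := by
  intro x t i α
  have hf : ∀ n, ContDiff ℝ 2 (fun q : (Fin 3 → ℝ) × ℝ => y q.1 q.2 n) := contDiff_pi.mp hy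
  set D := fun n => fderiv ℝ (fderiv ℝ fun q : (Fin 3 → ℝ) × ℝ => y q.1 q.2 n) (x, t)
  have hD_symm : ∀ n u w, D n u w = D n w u := fun n =>
    (hf n).contDiffAt.isSymmSndFDerivAt (by simp)
  have hF_time : ∀ j β, HasDerivAt (fun s => F x s j β) (D j (0, 1) (Pi.single β 1, 0)) t :=
    fun j β => by
      simp only [hF]
      exact (hf j).hasDerivAt_fderiv_slice_left_apply _
  have hv_space : ∀ j, HasFDerivAt (fun z => v z t j)
      (((D j).flip (0, 1)).comp (.inl ℝ _ ℝ)) x := fun j => by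
    simp only [hv]
    exact (hf j).hasFDerivAt_deriv_slice_right
  have hF_space : ∀ k γ, HasFDerivAt (fun z => F z t k γ)
      (((D k).flip (Pi.single γ 1, 0)).comp (.inl ℝ _ ℝ)) x := fun k γ => by
    simp only [hF]
    exact (hf k).hasFDerivAt_fderiv_slice_left_apply _
  rw [(hasDerivAt_cof3 hF_time i α).deriv]
  simp only [fderiv_sum_sum_sum_mul_apply hv_space hF_space, ContinuousLinearMap.comp_apply,
    ContinuousLinearMap.flip_apply, ContinuousLinearMap.inl_apply,
    hD_symm _ (Pi.single _ 1, 0) (0, 1)]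
  exact sum_lev_mul_lev_mul_eq_sum_flux i α _ _ (v x t)
    (fun k β γ => D k (Pi.single β 1, 0) (Pi.single γ 1, 0)) fun k β γ => hD_symm k _ _
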